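/- There is an absolute constant C > 0 such that for every positive integer d and every real t ≥ 2√d + 1, |E_{x∼N(0,1)}[x^d ∣ |x| ≤ t] − E_{x∼N(0,1)}[x^d]| ≤ C·t^d·e^{−t²/2}. -/

import Mathlib

/-!
Conditioning on `S = {|x| ≤ t}` changes the mean of `f = x^d` by at most `t^d · N(Sᶜ) + |∫_{Sᶜ} f|`,
since the conditional and unconditional integrals over `S` differ by the factor `1/N(S) - 1`.
Both terms are Gaussian tail integrals `∫_{|x|>t} |x|^k`, and for `2k ≤ t²` the integrand
`x^k e^{-x²/2}` is dominated on `x ≥ t` by `t^k e^{-tx/2}`, whose integral is `(2/t) t^k e^{-t²/2}`.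
-/

open MeasureTheory ProbabilityTheory Real Set

section ConditionalIntegral

variable {Ω : Type*} [MeasurableSpace Ω] {μ : Measure Ω} [IsProbabilityMeasure μ]

theorem abs_setIntegral_div_measureReal_sub_integral_le {f : Ω → ℝ} {s : Set Ω} {B : ℝ}
    (hs : MeasurableSet s) (hf : Integrable f μ) (hB₀ : 0 ≤ B) (hB : ∀ x ∈ s, |f x| ≤ B) :
    |(∫ x in s, f x ∂μ) / μ.real s - ∫ x, f x ∂μ| ≤ B * μ.real sᶜ + |∫ x in sᶜ, f x ∂μ| := by
  have hI : |∫ x in s, f x ∂μ| ≤ B * μ.real s :=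
    norm_setIntegral_le_of_norm_le_const (f := f) (measure_lt_top μ s) hB
  rw [← integral_add_compl hs hf, probReal_compl_eq_one_sub hs]
  rcases (measureReal_nonneg (μ := μ) (s := s)).eq_or_lt with hp | hp
  · have : ∫ x in s, f x ∂μ = 0 := abs_nonpos_iff.mp (by simpa [← hp] using hI)
    simp [this, ← hp, hB₀]
  · have hp' : 0 ≤ 1 / μ.real s - 1 := by
      rw [sub_nonneg, le_div_iff₀ hp, one_mul]; exact measureReal_le_one
    calc _ = |(∫ x in s, f x ∂μ) * (1 / μ.real s - 1) - ∫ x in sᶜ, f x ∂μ| := by ring_nf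
      _ ≤ |∫ x in s, f x ∂μ| * (1 / μ.real s - 1) + |∫ x in sᶜ, f x ∂μ| := by
        grw [abs_sub, abs_mul, abs_of_nonneg hp']
      _ ≤ B * μ.real s * (1 / μ.real s - 1) + |∫ x in sᶜ, f x ∂μ| := by gcongr
      _ = _ := by field_simp

end ConditionalIntegral
lemma pow_le_pow_mul_exp {k : ℕ} {t x : ℝ} (ht : 0 < t) (hx : t ≤ x) :
    x ^ k ≤ t ^ k * exp (k * (x - t) / t) := by
  have hxt : x / t ≤ exp ((x - t) / t) := by
    simpa [sub_div, div_self ht.ne'] using add_one_le_exp ((x - t) / t)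
  calc x ^ k = t ^ k * (x / t) ^ k := by rw [div_pow, mul_div_cancel₀ _ (by positivity)]
    _ ≤ t ^ k * exp ((x - t) / t) ^ k := by gcongr; exact div_nonneg (ht.le.trans hx) ht.le
    _ = t ^ k * exp (k * (x - t) / t) := by rw [← exp_nat_mul, mul_div_assoc]

lemma pow_mul_exp_neg_sq_half_le {k : ℕ} {t x : ℝ} (ht : 0 < t) (hk : 2 * k ≤ t ^ 2)
    (hx : t ≤ x) : x ^ k * exp (-x ^ 2 / 2) ≤ t ^ k * exp (-(t / 2) * x) := by
  have hkt : k * (x - t) / t ≤ t / 2 * (x - t) := by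
    rw [div_le_iff₀ ht]; nlinarith
  calc x ^ k * exp (-x ^ 2 / 2) ≤ t ^ k * exp (k * (x - t) / t) * exp (-x ^ 2 / 2) := by
        gcongr; exact pow_le_pow_mul_exp ht hx
    _ ≤ t ^ k * exp (-(t / 2) * x) := by
        rw [mul_assoc, ← exp_add]
        gcongr
        nlinarith [sq_nonneg (x - t)]

lemma integrable_pow_mul_exp_neg_sq_half (k : ℕ) :
    Integrable fun x : ℝ ↦ x ^ k * exp (-x ^ 2 / 2) := by
  convert integrable_rpow_mul_exp_neg_mul_sq (b := 1 / 2) (by norm_num)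
    (s := k) (by linarith [(Nat.cast_nonneg k : (0 : ℝ) ≤ k)]) using 2 with x
  rw [rpow_natCast]; ring_nf

lemma integral_Ioi_pow_mul_exp_neg_sq_half_le {k : ℕ} {t : ℝ} (ht : 0 < t)
    (hk : 2 * k ≤ t ^ 2) :
    ∫ x in Ioi t, x ^ k * exp (-x ^ 2 / 2) ≤ 2 / t * (t ^ k * exp (-t ^ 2 / 2)) := by
  have hneg : -(t / 2) < 0 := by linarith
  calc ∫ x in Ioi t, x ^ k * exp (-x ^ 2 / 2) ≤ ∫ x in Ioi t, t ^ k * exp (-(t / 2) * x) :=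
        setIntegral_mono_on (integrable_pow_mul_exp_neg_sq_half k).integrableOn
          ((integrableOn_exp_mul_Ioi hneg t).const_mul _) measurableSet_Ioi
          fun x hx ↦ pow_mul_exp_neg_sq_half_le ht hk (le_of_lt hx)
    _ = 2 / t * (t ^ k * exp (-t ^ 2 / 2)) := by
        rw [integral_const_mul, integral_exp_mul_Ioi hneg]
        field_simp

lemma gaussianPDFReal_zero_one_le (x : ℝ) : gaussianPDFReal 0 1 x ≤ exp (-x ^ 2 / 2) := by
  have h : 1 ≤ √(2 * π) := one_le_sqrt.mpr (by linarith [pi_gt_three])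
  simpa [gaussianPDFReal_def] using mul_le_of_le_one_left (exp_pos _).le (inv_le_one_of_one_le₀ h)

lemma setIntegral_abs_pow_gaussianReal_tail_le {k : ℕ} {t : ℝ} (ht : 0 < t)
    (hk : 2 * k ≤ t ^ 2) :
    ∫ x in {x | t < |x|}, |x| ^ k ∂gaussianReal 0 1 ≤ 4 / t * (t ^ k * exp (-t ^ 2 / 2)) := by
  have hT : MeasurableSet {x : ℝ | t < |x|} := measurableSet_lt measurable_const measurable_abs
  set g : ℝ → ℝ := (Ioi t).indicator fun y ↦ y ^ k * exp (-y ^ 2 / 2)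
  have hg : (fun x ↦ g |x|) = {x | t < |x|}.indicator fun x ↦ |x| ^ k * exp (-x ^ 2 / 2) := by
    ext x
    simp only [g, indicator, mem_Ioi, mem_ofPred_eq, sq_abs]
  have hg_int : Integrable fun x ↦ g |x| := by
    rw [hg]
    exact ((integrable_pow_mul_exp_neg_sq_half k).norm.congr
      (ae_of_all _ fun x ↦ by simp)).indicator hT
  calc ∫ x in {x | t < |x|}, |x| ^ k ∂gaussianReal 0 1
      = ∫ x, gaussianPDFReal 0 1 x * {x | t < |x|}.indicator (fun x ↦ |x| ^ k) x := by
        rw [← integral_indicator hT, integral_gaussianReal_eq_integral_smul one_ne_zero]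
        rfl
    _ ≤ ∫ x, g |x| := by
        refine integral_mono_of_nonneg (ae_of_all _ fun x ↦ ?_) hg_int (ae_of_all _ fun x ↦ ?_)
        · exact mul_nonneg (gaussianPDFReal_nonneg 0 1 x)
            (indicator_nonneg (fun _ _ ↦ by positivity) x)
        · rw [hg]
          simp only [indicator]
          split_ifs
          · rw [mul_comm]; gcongr; exact gaussianPDFReal_zero_one_le x
          · simp
    _ = 2 * ∫ x in Ioi t, x ^ k * exp (-x ^ 2 / 2) := by
        rw [integral_comp_abs, setIntegral_indicator measurableSet_Ioi, Ioi_inter_Ioi,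
          max_eq_right ht.le]
    _ ≤ 2 * (2 / t * (t ^ k * exp (-t ^ 2 / 2))) := by
        gcongr; exact integral_Ioi_pow_mul_exp_neg_sq_half_le ht hk
    _ = 4 / t * (t ^ k * exp (-t ^ 2 / 2)) := by ring

lemma integrable_pow_gaussianReal (m : ℝ) (v : NNReal) (k : ℕ) :
    Integrable (fun x ↦ x ^ k) (gaussianReal m v) :=
  integrable_pow_of_integrable_exp_mul one_ne_zero (integrable_exp_mul_gaussianReal 1)
    (integrable_exp_mul_gaussianReal (-1)) k

/-- **Truncation does not change one-dimensional Gaussian moments much.**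
There is an absolute constant `C > 0` such that for every positive integer `d` and every real
`t ≥ 2√d + 1`, `|E_{x∼N(0,1)}[x^d ∣ |x| ≤ t] − E_{x∼N(0,1)}[x^d]| ≤ C · t^d · e^{−t²/2}`.
The conditional expectation given `|x| ≤ t` is written as the integral over `{x : |x| ≤ t}`
divided by the probability of that event. -/
theorem gaussian_truncated_moment_close :
    ∃ C : ℝ, 0 < C ∧
      ∀ (d : ℕ) (t : ℝ), 0 < d → 2 * Real.sqrt d + 1 ≤ t →
        |(∫ x in {x : ℝ | |x| ≤ t}, x ^ d ∂(gaussianReal 0 1)) /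
            ((gaussianReal 0 1) {x : ℝ | |x| ≤ t}).toReal
          - ∫ x, x ^ d ∂(gaussianReal 0 1)| ≤ C * t ^ d * Real.exp (-(t ^ 2) / 2) := by
  refine ⟨8, by norm_num, fun d t _ ht ↦ ?_⟩
  have ht1 : 1 ≤ t := by linarith [sqrt_nonneg (d : ℝ)]
  have hdt : 2 * (d : ℝ) ≤ t ^ 2 := by
    nlinarith [sq_sqrt (Nat.cast_nonneg d : (0 : ℝ) ≤ d), sqrt_nonneg (d : ℝ)]
  have hS : MeasurableSet {x : ℝ | |x| ≤ t} := measurableSet_le measurable_abs measurable_const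
  have hSc : {x : ℝ | |x| ≤ t}ᶜ = {x | t < |x|} := by ext; simp
  have hmass : (gaussianReal 0 1).real {x : ℝ | |x| ≤ t}ᶜ ≤ 4 / t * exp (-t ^ 2 / 2) := by
    simpa [hSc] using setIntegral_abs_pow_gaussianReal_tail_le (k := 0) (by positivity)
      (by simp; positivity)
  have hrest : |∫ x in {x : ℝ | |x| ≤ t}ᶜ, x ^ d ∂gaussianReal 0 1|
      ≤ 4 / t * (t ^ d * exp (-t ^ 2 / 2)) := by
    rw [hSc]
    exact abs_integral_le_integral_abs.trans
      (by simpa [abs_pow] using setIntegral_abs_pow_gaussianReal_tail_le (by positivity) hdt)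
  calc _ ≤ t ^ d * (gaussianReal 0 1).real {x : ℝ | |x| ≤ t}ᶜ
          + |∫ x in {x : ℝ | |x| ≤ t}ᶜ, x ^ d ∂gaussianReal 0 1| :=
        abs_setIntegral_div_measureReal_sub_integral_le hS (integrable_pow_gaussianReal 0 1 d)
          (by positivity) fun x hx ↦ by rw [abs_pow]; exact pow_le_pow_left₀ (abs_nonneg x) hx d
    _ ≤ t ^ d * (4 / t * exp (-t ^ 2 / 2)) + 4 / t * (t ^ d * exp (-t ^ 2 / 2)) := by
        gcongr
    _ = 8 / t * (t ^ d * exp (-t ^ 2 / 2)) := by ring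
    _ ≤ 8 * t ^ d * exp (-(t ^ 2) / 2) := by
        rw [mul_assoc]; gcongr; exact div_le_self (by norm_num) ht1
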